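/- Let r ≥ 1 be an integer and let β ∈ ℂ with Re β > −1. Then the modified Mittag-Leffler series satisfies lim_{t→+∞} e^(−t)·∑_{m=0}^∞ t^(r·m+β)/Γ(1 + r·m + β) = 1/r, where t^(r·m+β) := exp((r·m+β)·log t) for t > 0 and Γ is the complex Gamma function. -/

import Mathlib

/-!
For `‖z‖ = 1` and `0 < re β`, expanding `exp (z (t - x))` and integrating termwise against
`x ^ (β - 1)` (Beta integrals) shows that `S_z(t) = ∑ zⁿ t^(n+β) / Γ(n+β+1)` is the convolution
`Γ(β)⁻¹ ∫₀ᵗ exp (z (t - x)) x^(β-1) dx`. Hence `e^(-t) S_z(t)` is the Gamma integral of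
`e^(-x) x^(β-1)` weighted by `exp ((z - 1)(t - x))`, and dominated convergence gives the limit
`1` for `z = 1` and `0` for the other `z` on the unit circle. The recursion
`S_z^β = t^β / Γ(β+1) + z S_z^(β+1)` extends this to `-1 < re β`. Averaging `S_z` over the
`r`-th roots of unity `z` keeps exactly the terms with `r ∣ n`, so the limit is `1 / r`.
-/

/-- Complex power of a real number via the real logarithm:
`s ^ w := exp (w * log s)`. -/
noncomputable def cpowR (s : ℝ) (w : ℂ) : ℂ := Complex.exp (w * Real.log s)

open Complex Filter Set MeasureTheory
open scoped Nat Topology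

lemma cpowR_eq_cpow {s : ℝ} (hs : 0 < s) (w : ℂ) : cpowR s w = (s : ℂ) ^ w := by
  rw [cpowR, cpow_def_of_ne_zero (by exact_mod_cast hs.ne'), ← ofReal_log hs.le, mul_comm]

lemma re_lt_one_of_norm_eq_one {z : ℂ} (hz : ‖z‖ = 1) (hz1 : z ≠ 1) : z.re < 1 := by
  refine ((re_le_norm z).trans_eq hz).lt_of_ne fun h => hz1 ?_
  rw [eq_coe_norm_of_nonneg (re_eq_norm.1 (h.trans hz.symm)), hz, ofReal_one]

lemma tendsto_exp_neg_mul_cpow (β : ℂ) :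
    Tendsto (fun t : ℝ => exp (-t) * (t : ℂ) ^ β) atTop (𝓝 0) := by
  refine squeeze_zero_norm' ?_ (by simpa [mul_comm] using
    tendsto_rpow_mul_exp_neg_mul_atTop_nhds_zero β.re 1 one_pos)
  filter_upwards [eventually_gt_atTop 0] with t ht
  rw [norm_mul, norm_exp, norm_cpow_eq_rpow_re_of_pos ht, neg_re, ofReal_re, mul_comm]

lemma tendsto_integral_mul_sub {𝕜 : Type*} [RCLike 𝕜] {g h : ℝ → 𝕜} (hg : IntegrableOn g (Ioi 0))
    (hh : Continuous h) {C : ℝ} (hC : ∀ s, 0 ≤ s → ‖h s‖ ≤ C) {L : 𝕜}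
    (hL : Tendsto h atTop (𝓝 L)) :
    Tendsto (fun t => ∫ x in (0 : ℝ)..t, h (t - x) * g x) atTop
      (𝓝 (L * ∫ x in Ioi 0, g x)) := by
  set F : ℝ → ℝ → 𝕜 := fun t => (Iic t).indicator fun x => h (t - x) * g x
  have hF : ∀ t, 0 ≤ t → ∫ x in (0 : ℝ)..t, h (t - x) * g x = ∫ x in Ioi 0, F t x := fun t ht => by
    rw [intervalIntegral.integral_of_le ht, setIntegral_indicator measurableSet_Iic, Ioi_inter_Iic]
  have hC0 : 0 ≤ C := (norm_nonneg _).trans (hC 0 le_rfl)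
  rw [← integral_const_mul]
  refine Tendsto.congr' (eventually_atTop.2 ⟨0, fun t ht => (hF t ht).symm⟩)
    (tendsto_integral_filter_of_dominated_convergence (fun x => C * ‖g x‖) ?_ ?_
      (hg.norm.const_mul C) ?_)
  · refine Eventually.of_forall fun t => AEStronglyMeasurable.indicator ?_ measurableSet_Iic
    exact (hh.comp (continuous_const.sub continuous_id)).aestronglyMeasurable.mul
      hg.aestronglyMeasurable
  · refine Eventually.of_forall fun t => ae_of_all _ fun x => ?_
    by_cases hx : x ≤ t
    · simp only [F, indicator_of_mem (mem_Iic.2 hx), norm_mul]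
      gcongr
      exact hC _ (sub_nonneg.2 hx)
    · rw [show F t x = 0 from indicator_of_notMem (notMem_Iic.2 (not_le.1 hx)) _, norm_zero]
      positivity
  · refine ae_of_all _ fun x => ?_
    have hshift : Tendsto (fun t => h (t - x)) atTop (𝓝 L) :=
      hL.comp (by simpa [sub_eq_add_neg] using tendsto_atTop_add_const_right atTop (-x) tendsto_id)
    refine (hshift.mul_const (g x)).congr' (eventually_atTop.2 ⟨x, fun t ht => ?_⟩)
    simp only [F, indicator_of_mem (mem_Iic.2 ht)]

lemma sum_range_pow_pow_of_isPrimitiveRoot {K : Type*} [Field K] {ζ : K} {r : ℕ}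
    (hζ : IsPrimitiveRoot ζ r) (n : ℕ) :
    ∑ j ∈ Finset.range r, (ζ ^ j) ^ n = if r ∣ n then (r : K) else 0 := by
  simp_rw [← pow_mul, mul_comm _ n, pow_mul]
  split_ifs with hn
  · simp [(hζ.pow_eq_one_iff_dvd n).2 hn]
  · have hne : ζ ^ n ≠ 1 := fun h => hn ((hζ.pow_eq_one_iff_dvd n).1 h)
    rw [geom_sum_eq hne, ← pow_mul, mul_comm, pow_mul, hζ.pow_eq_one, one_pow, sub_self, zero_div]

lemma hasSum_comp_mul_of_isPrimitiveRoot {K : Type*} [Field K] [CharZero K] [TopologicalSpace K]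
    [IsTopologicalRing K] {ζ : K} {r : ℕ} (hζ : IsPrimitiveRoot ζ r) (hr : r ≠ 0) {a s : ℕ → K}
    (hs : ∀ j ∈ Finset.range r, HasSum (fun n => (ζ ^ j) ^ n * a n) (s j)) :
    HasSum (fun m => a (r * m)) ((r : K)⁻¹ * ∑ j ∈ Finset.range r, s j) := by
  have hfilter :
      HasSum (fun n => if r ∣ n then (r : K) * a n else 0) (∑ j ∈ Finset.range r, s j) := by
    refine (hasSum_sum hs).congr_fun fun n => ?_
    rw [← Finset.sum_mul, sum_range_pow_pow_of_isPrimitiveRoot hζ, ite_mul, zero_mul]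
  have hr' : (r : K) ≠ 0 := Nat.cast_ne_zero.2 hr
  rw [← (mul_right_injective₀ hr).hasSum_iff fun n hn => if_neg fun ⟨m, hm⟩ => hn ⟨m, hm.symm⟩]
    at hfilter
  refine (hfilter.mul_left (r : K)⁻¹).congr_fun fun m => ?_
  simp [hr']

lemma integral_sub_pow_mul_cpow {β : ℂ} (hβ : 0 < β.re) (n : ℕ) {t : ℝ} (ht : 0 < t) :
    ∫ x in (0 : ℝ)..t, ((t : ℂ) - x) ^ n * (x : ℂ) ^ (β - 1) =
      n ! * Gamma β / Gamma (n + β + 1) * (t : ℂ) ^ ((n : ℂ) + β) := by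
  have ht' : (t : ℂ) ≠ 0 := by exact_mod_cast ht.ne'
  have hbeta : betaIntegral β (n + 1) = n ! * Gamma β / Gamma (n + β + 1) := by
    have h := Gamma_mul_Gamma_eq_betaIntegral hβ (t := n + 1) (by simp; positivity)
    rw [Gamma_nat_eq_factorial, show β + (n + 1) = n + β + 1 by ring] at h
    rw [eq_div_iff (Gamma_ne_zero_of_re_pos (by simp; positivity)), mul_comm, ← h, mul_comm]
  have hscale : ∫ x in (0 : ℝ)..t, ((t : ℂ) - x) ^ n * (x : ℂ) ^ (β - 1) =
      (t : ℂ) ^ (n + 1) * (t : ℂ) ^ (β - 1) * betaIntegral β (n + 1) := by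
    have h := intervalIntegral.smul_integral_comp_mul_left
      (fun x : ℝ => ((t : ℂ) - x) ^ n * (x : ℂ) ^ (β - 1)) t (a := 0) (b := 1)
    rw [mul_zero, mul_one] at h
    rw [← h, betaIntegral, real_smul, ← intervalIntegral.integral_const_mul,
      ← intervalIntegral.integral_const_mul]
    refine intervalIntegral.integral_congr fun y hy => ?_
    rw [uIcc_of_le zero_le_one] at hy
    simp only [add_sub_cancel_right, cpow_natCast, ofReal_mul]
    rw [mul_cpow_ofReal_nonneg ht.le hy.1, ← mul_one_sub, mul_pow]
    ring
  rw [hscale, hbeta, cpow_add _ _ ht', cpow_natCast, cpow_sub _ _ ht', cpow_one]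
  field_simp
  ring

lemma hasSum_mul_cpow_div_Gamma {β : ℂ} (hβ : 0 < β.re) (z : ℂ) {t : ℝ} (ht : 0 < t) :
    HasSum (fun n : ℕ => z ^ n * (t : ℂ) ^ ((n : ℂ) + β) / Gamma (n + β + 1))
      ((Gamma β)⁻¹ * ∫ x in (0 : ℝ)..t, exp (z * (t - x)) * (x : ℂ) ^ (β - 1)) := by
  have hexp : HasSum (fun n : ℕ => ∫ x in (0 : ℝ)..t, (z * (t - x)) ^ n / n ! * (x : ℂ) ^ (β - 1))
      (∫ x in (0 : ℝ)..t, exp (z * (t - x)) * (x : ℂ) ^ (β - 1)) := by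
    refine intervalIntegral.hasSum_integral_of_dominated_convergence
      (fun n x => (‖z‖ * t) ^ n / n ! * x ^ (β.re - 1)) (fun n => ?_) (fun n => ?_) ?_ ?_ ?_
    · exact (by fun_prop : Measurable fun x : ℝ =>
        (z * (t - x)) ^ n / n ! * (x : ℂ) ^ (β - 1)).aestronglyMeasurable
    · refine ae_of_all _ fun x hx => ?_
      rw [uIoc_of_le ht.le] at hx
      rw [norm_mul, norm_div, norm_pow, norm_cpow_eq_rpow_re_of_pos hx.1, norm_mul,
        Complex.norm_natCast, sub_re, one_re, ← ofReal_sub, norm_real, Real.norm_of_nonneg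
        (sub_nonneg.2 hx.2)]
      obtain ⟨hx0, hxt⟩ := hx
      gcongr
      linarith
    · exact ae_of_all _ fun x _ => (Real.summable_pow_div_factorial _).mul_right _
    · simp_rw [tsum_mul_right]
      exact (intervalIntegral.intervalIntegrable_rpow' (by linarith)).const_mul _
    · refine ae_of_all _ fun x _ => ?_
      rw [exp_eq_exp_ℂ]
      exact (NormedSpace.expSeries_div_hasSum_exp (z * (t - x))).mul_right ((x : ℂ) ^ (β - 1))
  refine (hexp.mul_left (Gamma β)⁻¹).congr_fun fun n => ?_
  simp_rw [mul_pow, mul_div_right_comm, mul_assoc]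
  rw [intervalIntegral.integral_const_mul, integral_sub_pow_mul_cpow hβ n ht]
  field_simp [Gamma_ne_zero_of_re_pos hβ, Nat.factorial_ne_zero]

/-- `t ^ β E_{1,β+1}(z t)`, with `E_{α,β}` the two-parameter Mittag-Leffler function. -/
noncomputable def mittagLefflerSeries (z β : ℂ) (t : ℝ) : ℂ :=
  ∑' n : ℕ, z ^ n * (t : ℂ) ^ ((n : ℂ) + β) / Gamma (n + β + 1)

lemma summable_mittagLefflerSeries {β : ℂ} (hβ : -1 < β.re) (z : ℂ) {t : ℝ} (ht : 0 < t) :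
    Summable fun n : ℕ => z ^ n * (t : ℂ) ^ ((n : ℂ) + β) / Gamma (n + β + 1) := by
  rw [← summable_nat_add_iff 1]
  refine ((hasSum_mul_cpow_div_Gamma (β := β + 1) (by simp; linarith) z ht).summable.mul_left
    z).congr fun n => ?_
  simp only [Nat.cast_add, Nat.cast_one, pow_succ]
  ring_nf

lemma mittagLefflerSeries_eq_add {β : ℂ} (hβ : -1 < β.re) (z : ℂ) {t : ℝ} (ht : 0 < t) :
    mittagLefflerSeries z β t =
      (t : ℂ) ^ β / Gamma (β + 1) + z * mittagLefflerSeries z (β + 1) t := by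
  rw [mittagLefflerSeries, (summable_mittagLefflerSeries hβ z ht).tsum_eq_zero_add,
    mittagLefflerSeries, ← tsum_mul_left]
  simp only [Nat.cast_add, Nat.cast_one, Nat.cast_zero, pow_zero, zero_add, one_mul, pow_succ]
  congr 1
  exact tsum_congr fun n => by ring_nf

lemma exp_neg_mul_mittagLefflerSeries {β : ℂ} (hβ : 0 < β.re) (z : ℂ) {t : ℝ} (ht : 0 < t) :
    exp (-t) * mittagLefflerSeries z β t = (Gamma β)⁻¹ *
      ∫ x in (0 : ℝ)..t, exp ((z - 1) * (t - x)) * (exp (-x) * (x : ℂ) ^ (β - 1)) := by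
  rw [mittagLefflerSeries, (hasSum_mul_cpow_div_Gamma hβ z ht).tsum_eq, mul_left_comm,
    ← intervalIntegral.integral_const_mul]
  congr 1
  refine intervalIntegral.integral_congr fun x _ => ?_
  simp only [← mul_assoc, ← exp_add]
  ring_nf

lemma tendsto_exp_neg_mul_mittagLefflerSeries_of_re_pos {β z L : ℂ} (hβ : 0 < β.re) (hz : z.re ≤ 1)
    (hL : Tendsto (fun s : ℝ => exp ((z - 1) * s)) atTop (𝓝 L)) :
    Tendsto (fun t : ℝ => exp (-t) * mittagLefflerSeries z β t) atTop (𝓝 L) := by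
  have hbound : ∀ s : ℝ, 0 ≤ s → ‖exp ((z - 1) * s)‖ ≤ 1 := fun s hs => by
    rw [norm_exp, Real.exp_le_one_iff]
    simpa using mul_nonpos_of_nonpos_of_nonneg (sub_nonpos.2 hz) hs
  have h := tendsto_integral_mul_sub (GammaIntegral_convergent hβ) (by fun_prop) hbound hL
  rw [← GammaIntegral, ← Gamma_eq_integral hβ] at h
  have hΓ : (Gamma β)⁻¹ * (L * Gamma β) = L := by field_simp [Gamma_ne_zero_of_re_pos hβ]
  refine hΓ ▸ (h.const_mul _).congr' ?_
  filter_upwards [eventually_gt_atTop 0] with t ht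
  push_cast
  exact (exp_neg_mul_mittagLefflerSeries hβ z ht).symm

lemma tendsto_exp_neg_mul_mittagLefflerSeries {β z : ℂ} (hβ : -1 < β.re) (hz : ‖z‖ = 1) :
    Tendsto (fun t : ℝ => exp (-t) * mittagLefflerSeries z β t) atTop
      (𝓝 (if z = 1 then 1 else 0)) := by
  have hL : Tendsto (fun s : ℝ => exp ((z - 1) * s)) atTop (𝓝 (if z = 1 then 1 else 0)) := by
    split_ifs with hz1
    · simp [hz1]
    · rw [tendsto_exp_nhds_zero_iff]
      simpa using tendsto_id.const_mul_atTop_of_neg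
        (sub_neg.2 (re_lt_one_of_norm_eq_one hz hz1))
  have hshift := tendsto_exp_neg_mul_mittagLefflerSeries_of_re_pos (β := β + 1) (by simp; linarith)
    ((re_le_norm z).trans hz.le) hL
  have hsum := ((tendsto_exp_neg_mul_cpow β).div_const (Gamma (β + 1))).add (hshift.const_mul z)
  rw [zero_div, zero_add, show z * (if z = 1 then 1 else 0) = if z = 1 then 1 else 0 by
    split_ifs with hz1 <;> simp [hz1]] at hsum
  refine hsum.congr' ?_
  filter_upwards [eventually_gt_atTop 0] with t ht
  rw [mittagLefflerSeries_eq_add hβ z ht]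
  ring

lemma tsum_comp_mul_eq_sum_mittagLefflerSeries {β ζ : ℂ} (hβ : -1 < β.re) {r : ℕ}
    (hζ : IsPrimitiveRoot ζ r) (hr : r ≠ 0) {t : ℝ} (ht : 0 < t) :
    ∑' m : ℕ, (t : ℂ) ^ (((r * m : ℕ) : ℂ) + β) / Gamma ((r * m : ℕ) + β + 1) =
      (r : ℂ)⁻¹ * ∑ j ∈ Finset.range r, mittagLefflerSeries (ζ ^ j) β t :=
  (hasSum_comp_mul_of_isPrimitiveRoot hζ hr
    (a := fun n : ℕ => (t : ℂ) ^ ((n : ℂ) + β) / Gamma (n + β + 1)) fun j _ => by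
      simpa only [mul_div_assoc, mittagLefflerSeries] using
        (summable_mittagLefflerSeries hβ (ζ ^ j) ht).hasSum).tsum_eq

lemma tendsto_exp_neg_mul_sum_mittagLefflerSeries {β ζ : ℂ} (hβ : -1 < β.re) {r : ℕ}
    (hζ : IsPrimitiveRoot ζ r) (hr : r ≠ 0) :
    Tendsto (fun t : ℝ => exp (-t) * ∑ j ∈ Finset.range r, mittagLefflerSeries (ζ ^ j) β t)
      atTop (𝓝 1) := by
  have hlim := tendsto_finsetSum (Finset.range r) fun j _ =>
    tendsto_exp_neg_mul_mittagLefflerSeries hβ (z := ζ ^ j)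
      (by rw [norm_pow, hζ.norm'_eq_one hr, one_pow])
  have hone : ∑ j ∈ Finset.range r, (if ζ ^ j = 1 then (1 : ℂ) else 0) = 1 := by
    refine (Finset.sum_eq_single_of_mem 0 (Finset.mem_range.2 (Nat.pos_of_ne_zero hr))
      fun j hj hj0 => if_neg fun h => hj0 ?_).trans (by simp)
    exact Nat.eq_zero_of_dvd_of_lt ((hζ.pow_eq_one_iff_dvd j).1 h) (Finset.mem_range.1 hj)
  simpa only [hone, Finset.mul_sum] using hlim

theorem stmt6 (r : ℕ) (hr : 1 ≤ r) (β : ℂ) (hβ : -1 < β.re) :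
    Filter.Tendsto (fun t : ℝ =>
      Complex.exp (-(t : ℂ)) *
        ∑' m : ℕ, cpowR t ((r : ℂ) * m + β) / Complex.Gamma (1 + (r : ℂ) * m + β))
      Filter.atTop (nhds (1 / (r : ℂ))) := by
  have hr0 : r ≠ 0 := by omega
  have hζ := isPrimitiveRoot_exp r hr0
  have h := (tendsto_exp_neg_mul_sum_mittagLefflerSeries hβ hζ hr0).const_mul (r : ℂ)⁻¹
  rw [mul_one] at h
  rw [one_div]
  refine h.congr' ?_
  filter_upwards [eventually_gt_atTop 0] with t ht
  rw [mul_left_comm, ← tsum_comp_mul_eq_sum_mittagLefflerSeries hβ hζ hr0 ht]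
  refine congrArg (exp (-t) * ·) (tsum_congr fun m => ?_)
  rw [cpowR_eq_cpow ht]
  push_cast
  ring_nf
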